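/- arXiv:math/9903050 — 2 statements merged into one kernel-verified Lean document; each statement's English description precedes it below -/
import Mathlib

section
/- Let r be an odd prime and let X be the positive real number √(r/2)·(1/sin(π/r)), i.e. X = √(r/2)/sin(π/r). Then X is an algebraic integer, and X lies in the 8r-th cyclotomic field ℚ(exp(2πi/(8r))) viewed inside ℂ; in other words, X belongs to ℤ[u], the ring of integers of ℚ(u), where u = exp(2πi/(8r)). -/
/-!
Write `r = 2m + 1`. Taking norms in `∏_{k=1}^{r-1} (1 - ζ^k) = r` for a primitive `r`-th root of
unity `ζ` gives `∏_{k=1}^{r-1} 2 sin(kπ/r) = r`; since `sin(kπ/r) = sin((r-k)π/r)` the factors pair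
up and `∏_{k=1}^{m} 2 sin(kπ/r) = √r`. Dividing by `√2 · sin(π/r)` yields
`X = √2 · ∏_{k=2}^{m} 2 sin(kπ/r)`. With `u` a primitive `8r`-th root of unity,
`√2 = u^r + u^{-r}`, `i = u^{2r}` and `2 sin(kπ/r) = i (u^{-4k} - u^{4k})`, so `X ∈ ℤ[u]`.
-/

open Real Complex Finset

theorem sin_mul_pi_div_nonneg {a b : ℝ} (ha : 0 ≤ a) (hab : a ≤ b) :
    0 ≤ Real.sin (a * π / b) := by
  refine sin_nonneg_of_nonneg_of_le_pi (div_nonneg (by positivity) (ha.trans hab))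
    (div_le_of_le_mul₀ (ha.trans hab) pi_pos.le ?_)
  rw [mul_comm]
  exact mul_le_mul_of_nonneg_left hab pi_pos.le

theorem prod_range_two_mul_sin_pi_div (n : ℕ) :
    ∏ k ∈ range n, 2 * Real.sin ((k + 1) * π / (n + 1)) = n + 1 := by
  have hμ : IsPrimitiveRoot (exp (2 * π * I / (n + 1 : ℕ))) (n + 1) :=
    isPrimitiveRoot_exp (n + 1) n.succ_ne_zero
  have key := congrArg (‖·‖) hμ.prod_one_sub_pow_eq_order
  rw [norm_prod, show ((n : ℂ) + 1) = ((n + 1 : ℝ) : ℂ) by push_cast; ring, norm_real,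
    Real.norm_of_nonneg (by positivity)] at key
  refine (prod_congr rfl fun k hk => ?_).trans key
  have hk : (k + 1 : ℝ) ≤ n + 1 := by
    rw [mem_range] at hk
    exact_mod_cast Nat.succ_le_succ hk.le
  have hθ : exp (2 * π * I / (n + 1 : ℕ)) ^ (k + 1)
      = exp (I * ↑(2 * ((k + 1) * π / (n + 1)))) := by
    rw [← Complex.exp_nat_mul]
    push_cast
    ring_nf
  rw [norm_sub_rev, hθ, norm_exp_I_mul_ofReal_sub_one, mul_div_cancel_left₀ _ two_ne_zero,
    Real.norm_of_nonneg (mul_nonneg two_pos.le (sin_mul_pi_div_nonneg (by positivity) hk))]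

theorem prod_range_two_mul_sin_pi_div_odd (m : ℕ) :
    ∏ k ∈ range m, 2 * Real.sin ((k + 1) * π / (2 * m + 1)) = √(2 * m + 1) := by
  set f : ℕ → ℝ := fun k => 2 * Real.sin ((k + 1) * π / (2 * m + 1))
  have hsymm : ∀ k < m, f (m + k) = f (m - 1 - k) := by
    intro k hk
    have hθ : ((m + k : ℕ) + 1) * π / (2 * m + 1)
        = π - ((m - 1 - k : ℕ) + 1) * π / (2 * m + 1) := by
      rw [Nat.cast_sub (by omega), Nat.cast_sub (by omega)]
      field_simp
      push_cast
      ring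
    simp only [f, hθ, Real.sin_pi_sub]
  have hsq : (∏ k ∈ range m, f k) * ∏ k ∈ range m, f k = 2 * m + 1 := by
    have h := prod_range_two_mul_sin_pi_div (2 * m)
    push_cast at h
    rw [two_mul, prod_range_add] at h
    rwa [prod_congr rfl fun k hk => hsymm k (mem_range.mp hk), prod_range_reflect f m] at h
  have hnonneg : 0 ≤ ∏ k ∈ range m, f k := by
    refine prod_nonneg fun k hk => mul_nonneg two_pos.le (sin_mul_pi_div_nonneg (by positivity) ?_)
    rw [mem_range] at hk
    exact_mod_cast (by omega : k + 1 ≤ 2 * m + 1)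
  rw [← hsq, Real.sqrt_mul_self hnonneg]

theorem sqrt_half_div_sin_pi_div_odd (m : ℕ) :
    √((2 * m + 3) / 2) * (1 / Real.sin (π / (2 * m + 3)))
      = √2 * ∏ k ∈ range m, 2 * Real.sin ((k + 2) * π / (2 * m + 3)) := by
  have h := prod_range_two_mul_sin_pi_div_odd (m + 1)
  rw [prod_range_succ'] at h
  push_cast at h
  rw [show 2 * ((m : ℝ) + 1) + 1 = 2 * m + 3 by ring] at h
  simp only [add_assoc, one_add_one_eq_two, zero_add, one_mul] at h
  have hs : Real.sin (π / (2 * m + 3)) ≠ 0 := by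
    refine (sin_pos_of_pos_of_lt_pi (by positivity) ?_).ne'
    rw [div_lt_iff₀ (by positivity)]
    nlinarith [pi_pos]
  rw [Real.sqrt_div' _ zero_le_two, ← h]
  generalize ∏ k ∈ range m, 2 * Real.sin ((k + 2) * π / (2 * m + 3)) = Q
  field_simp
  rw [Real.sq_sqrt zero_le_two]

theorem zpow_mem_adjoin_singleton_of_pow_eq_one {R K : Type*} [CommRing R] [Field K]
    [Algebra R K] {u : K} {N : ℕ} (hN : 0 < N) (hu : u ^ N = 1) (k : ℤ) :
    u ^ k ∈ Algebra.adjoin R {u} := by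
  have hmem : u ∈ Algebra.adjoin R {u} := Algebra.self_mem_adjoin_singleton R u
  have hinv : u⁻¹ = u ^ (N - 1) :=
    inv_eq_of_mul_eq_one_right (by rw [← pow_succ', Nat.sub_add_cancel hN, hu])
  obtain ⟨n, rfl | rfl⟩ := k.eq_nat_or_neg
  · rw [zpow_natCast]
    exact pow_mem hmem n
  · rw [zpow_neg, zpow_natCast, ← inv_pow, hinv]
    exact pow_mem (pow_mem hmem _) n

namespace Complex

variable {R : Type*} [CommRing R] [Algebra R ℂ] {N : ℕ}

theorem exp_int_mul_mem_adjoin (hN : 0 < N) (k : ℤ) :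
    exp (k * (2 * π * I / N)) ∈ Algebra.adjoin R {exp (2 * π * I / N)} := by
  rw [exp_int_mul]
  exact zpow_mem_adjoin_singleton_of_pow_eq_one hN (isPrimitiveRoot_exp N hN.ne').pow_eq_one k

theorem I_mem_adjoin (hN : 0 < N) (h4 : 4 ∣ N) :
    I ∈ Algebra.adjoin R {exp (2 * π * I / N)} := by
  obtain ⟨M, rfl⟩ := h4
  have hM : (M : ℂ) ≠ 0 := by exact_mod_cast (by omega : M ≠ 0)
  convert exp_int_mul_mem_adjoin (R := R) hN M using 1
  refine exp_pi_div_two_mul_I.symm.trans (congrArg exp ?_)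
  push_cast
  field_simp
  ring_nf

theorem ofReal_two_mul_cos_mem_adjoin (hN : 0 < N) (k : ℤ) :
    ((2 * Real.cos (2 * π * k / N) : ℝ) : ℂ) ∈ Algebra.adjoin R {exp (2 * π * I / N)} := by
  push_cast
  rw [two_cos]
  refine add_mem ?_ ?_
  · convert exp_int_mul_mem_adjoin hN k using 2
    ring
  · convert exp_int_mul_mem_adjoin hN (-k) using 2
    push_cast
    ring

theorem ofReal_two_mul_sin_mem_adjoin (hN : 0 < N) (h4 : 4 ∣ N) (k : ℤ) :
    ((2 * Real.sin (2 * π * k / N) : ℝ) : ℂ) ∈ Algebra.adjoin R {exp (2 * π * I / N)} := by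
  push_cast
  rw [two_sin]
  refine mul_mem (sub_mem ?_ ?_) (I_mem_adjoin hN h4)
  · convert exp_int_mul_mem_adjoin hN (-k) using 2
    push_cast
    ring
  · convert exp_int_mul_mem_adjoin hN k using 2
    ring

theorem ofReal_sqrt_two_mem_adjoin (hN : 0 < N) (h8 : 8 ∣ N) :
    ((√2 : ℝ) : ℂ) ∈ Algebra.adjoin R {exp (2 * π * I / N)} := by
  obtain ⟨M, rfl⟩ := h8
  have hM : (M : ℝ) ≠ 0 := by exact_mod_cast (by omega : M ≠ 0)
  convert ofReal_two_mul_cos_mem_adjoin (R := R) hN M using 3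
  push_cast
  rw [show 2 * π * M / (8 * M) = π / 4 by field_simp; ring, cos_pi_div_four]
  ring

theorem ofReal_sqrt_half_div_sin_pi_div_odd_mem_adjoin (m : ℕ) :
    ((√((2 * m + 3) / 2) * (1 / Real.sin (π / (2 * m + 3))) : ℝ) : ℂ)
      ∈ Algebra.adjoin R {exp (2 * π * I / (8 * (2 * m + 3) : ℕ))} := by
  have hN : 0 < 8 * (2 * m + 3) := by omega
  rw [sqrt_half_div_sin_pi_div_odd, ofReal_mul, ofReal_prod]
  refine mul_mem (ofReal_sqrt_two_mem_adjoin hN (dvd_mul_right 8 _))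
    (prod_mem fun k _ => ?_)
  convert ofReal_two_mul_sin_mem_adjoin hN (dvd_mul_of_dvd_left (by norm_num) _)
    (4 * (k + 2) : ℕ) using 4
  push_cast
  field_simp
  ring

end Complex

/-- Let `r` be an odd prime and `X = √(r/2) / sin(π/r)` (a positive real number).
Then `X` is an algebraic integer and, viewed in `ℂ`, it lies in `ℤ[u]`, the ring of
integers of the `8r`-th cyclotomic field `ℚ(u)` where `u = exp(2πi/(8r))`; in
particular `X` lies in the field `ℚ(u)` inside `ℂ`. -/
theorem X_is_algebraic_integer_in_cyclotomic
    (r : ℕ) (hr : Nat.Prime r) (hodd : Odd r)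
    (u : ℂ) (hu : u = Complex.exp (2 * Real.pi * Complex.I / (8 * r)))
    (X : ℝ) (hX : X = Real.sqrt (r / 2) * (1 / Real.sin (Real.pi / r))) :
    IsIntegral ℤ (X : ℂ)
    ∧ (X : ℂ) ∈ Algebra.adjoin ℤ ({u} : Set ℂ)
    ∧ (X : ℂ) ∈ Algebra.adjoin ℚ ({u} : Set ℂ) := by
  obtain ⟨m, rfl⟩ : ∃ m, r = 2 * m + 3 := by
    obtain ⟨k, rfl⟩ := hodd
    exact ⟨k - 1, by have := hr.two_le; omega⟩
  have hu' : u = exp (2 * π * I / (8 * (2 * m + 3) : ℕ)) := by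
    rw [hu]
    push_cast
    ring
  have hX' : X = √((2 * m + 3) / 2) * (1 / Real.sin (π / (2 * m + 3))) := by
    rw [hX]
    push_cast
    ring
  subst hu' hX'
  have hmemZ := ofReal_sqrt_half_div_sin_pi_div_odd_mem_adjoin (R := ℤ) m
  have hu_int := (isPrimitiveRoot_exp (8 * (2 * m + 3)) (by omega)).isIntegral (by omega)
  exact ⟨adjoin_le_integralClosure hu_int hmemZ, hmemZ,
    ofReal_sqrt_half_div_sin_pi_div_odd_mem_adjoin m⟩
end

section
/- Let r be an odd prime, u a primitive 8r-th root of unity, A = u², and for an integer n ≥ 0 let [n] = (A^{2n} − A^{−2n})/(A² − A^{−2}) be the quantized integer and [n]! = ∏_{k=1}^{n} [k] the quantized factorial (with [0]! = 1). Let x, y, z be nonnegative integers with x + y + z ≤ r − 2, corresponding to the admissible triple (a, b, c) = (y+z, z+x, x+y) at level r. Then the element θ(a,b,c) = ([x+y+z+1]! · [x]! · [y]! · [z]!) / ([y+z]! · [z+x]! · [x+y]!) of the field ℚ(u) lies in the ring of integers ℤ[u] and is a unit of that ring. -/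
/-!
For `0 < n < r` the quantized integer factors as `[n] = A ^ (2 - 2n) · (1 + ζ + ⋯ + ζ ^ (n - 1))`
with `ζ = A ^ 4 = u ^ 8` a primitive `r`-th root of unity. The power of `A` is a unit of `ℤ[u]`
because `u` is a root of unity, and since `n` is prime to `r` the geometric sum
`(ζ ^ n - 1) / (ζ - 1)` is a cyclotomic unit. So every `[m]!` with `m < r` is a unit of `ℤ[u]`,
and all seven factorials in `θ` have argument at most `x + y + z + 1 ≤ r - 1`.
-/

open Finset

namespace Subalgebra

variable {R K : Type*} [CommRing R] [Field K] [Algebra R K] (S : Subalgebra R K)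

def unitSubmonoid : Submonoid K :=
  (IsUnit.submonoid S).map S.val

variable {S}

theorem mem_unitSubmonoid_iff {v : K} :
    v ∈ S.unitSubmonoid ↔ v ∈ S ∧ ∃ w ∈ S, v * w = 1 := by
  simp only [unitSubmonoid, Submonoid.mem_map, IsUnit.mem_submonoid_iff, isUnit_iff_exists_inv]
  constructor
  · rintro ⟨a, ⟨b, hab⟩, rfl⟩
    exact ⟨a.2, b, b.2, congrArg Subtype.val hab⟩
  · rintro ⟨hv, w, hw, hvw⟩
    exact ⟨⟨v, hv⟩, ⟨⟨w, hw⟩, Subtype.ext hvw⟩, rfl⟩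

theorem coe_mem_unitSubmonoid {a : S} (ha : IsUnit a) : (a : K) ∈ S.unitSubmonoid :=
  ⟨a, ha, rfl⟩

theorem inv_mem_unitSubmonoid {v : K} (hv : v ∈ S.unitSubmonoid) : v⁻¹ ∈ S.unitSubmonoid := by
  obtain ⟨a, ⟨b, rfl⟩, rfl⟩ := hv
  convert coe_mem_unitSubmonoid b⁻¹.isUnit
  exact (map_units_inv S.val b).symm

theorem zpow_mem_unitSubmonoid {v : K} (hv : v ∈ S.unitSubmonoid) (k : ℤ) :
    v ^ k ∈ S.unitSubmonoid := by
  cases k with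
  | ofNat m => exact zpow_natCast v m ▸ pow_mem hv m
  | negSucc m => exact (zpow_negSucc v m).symm ▸ inv_mem_unitSubmonoid (pow_mem hv _)

theorem _root_.IsPrimitiveRoot.mem_unitSubmonoid {ζ : K} {k : ℕ} (hζ : IsPrimitiveRoot ζ k)
    (hk : k ≠ 0) (hζS : ζ ∈ S) : ζ ∈ S.unitSubmonoid :=
  coe_mem_unitSubmonoid (a := ⟨ζ, hζS⟩)
    ((IsPrimitiveRoot.coe_submonoidClass_iff.mp hζ).isUnit hk)

theorem _root_.IsPrimitiveRoot.geom_sum_mem_unitSubmonoid {ζ : K} {k j : ℕ}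
    (hζ : IsPrimitiveRoot ζ k) (hk : 2 ≤ k) (hj : j.Coprime k) (hζS : ζ ∈ S) :
    ∑ i ∈ range j, ζ ^ i ∈ S.unitSubmonoid := by
  have hζ' : IsPrimitiveRoot (⟨ζ, hζS⟩ : S) k := IsPrimitiveRoot.coe_submonoidClass_iff.mp hζ
  simpa using coe_mem_unitSubmonoid (hζ'.geom_sum_isUnit hk hj)

end Subalgebra

theorem quantum_eq_zpow_mul_geom_sum {K : Type*} [Field K] {A : K} (hA0 : A ≠ 0)
    (hA : A ^ 4 ≠ 1) (n : ℕ) :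
    (A ^ (2 * (n : ℤ)) - A ^ (-(2 * (n : ℤ)))) / (A ^ (2 : ℤ) - A ^ (-2 : ℤ)) =
      A ^ (2 - 2 * (n : ℤ)) * ∑ i ∈ range n, (A ^ 4) ^ i := by
  have hgeom := mul_geom_sum (A ^ 4) n
  have hden : A ^ 4 - 1 ≠ 0 := sub_ne_zero.mpr hA
  have hdiff : A ^ 2 - (A ^ 2)⁻¹ = (A ^ 4 - 1) / A ^ 2 := by field_simp
  rw [zpow_sub₀ hA0, zpow_neg, zpow_neg, zpow_mul, zpow_natCast, zpow_ofNat, hdiff]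
  field_simp
  rw [hgeom]
  ring

theorem quantum_mem_unitSubmonoid {K : Type*} [Field K] {r n : ℕ} (hr : 2 ≤ r) {u : K}
    (hu : IsPrimitiveRoot u (8 * r)) (hn : n.Coprime r) :
    ((u ^ 2) ^ (2 * (n : ℤ)) - (u ^ 2) ^ (-(2 * (n : ℤ)))) /
        ((u ^ 2) ^ (2 : ℤ) - (u ^ 2) ^ (-2 : ℤ)) ∈
      (Algebra.adjoin ℤ ({u} : Set K)).unitSubmonoid := by
  have hu0 : u ≠ 0 := hu.ne_zero (by omega)
  have hu8 : IsPrimitiveRoot (u ^ 8) r := hu.pow (by omega) rfl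
  have hu_mem : u ∈ Algebra.adjoin ℤ ({u} : Set K) := Algebra.self_mem_adjoin_singleton ℤ u
  rw [quantum_eq_zpow_mul_geom_sum (pow_ne_zero 2 hu0), ← pow_mul]
  · exact mul_mem (Subalgebra.zpow_mem_unitSubmonoid
      (pow_mem (hu.mem_unitSubmonoid (by omega) hu_mem) 2) _)
      (hu8.geom_sum_mem_unitSubmonoid hr hn (pow_mem hu_mem 8))
  · rw [← pow_mul]
    exact hu.pow_ne_one_of_pos_of_lt (by norm_num) (by omega)

theorem theta_mem_and_unit_general
    (r : ℕ) (hr : Nat.Prime r)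
    (K : Type) [Field K] (u : K)
    (hu : IsPrimitiveRoot u (8 * r))
    (A : K) (hA : A = u ^ 2)
    (q : ℕ → K)
    (hq : ∀ n : ℕ, q n =
      (A ^ (2 * (n : ℤ)) - A ^ (-(2 * (n : ℤ)))) / (A ^ (2 : ℤ) - A ^ (-2 : ℤ)))
    (qfact : ℕ → K)
    (hqfact : ∀ n : ℕ, qfact n = ∏ k ∈ Finset.range n, q (k + 1))
    (x y z : ℕ) (hxyz : x + y + z ≤ r - 2)
    (θ : K)
    (hθ : θ = (qfact (x + y + z + 1) * qfact x * qfact y * qfact z) /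
              (qfact (y + z) * qfact (z + x) * qfact (x + y))) :
    θ ∈ Algebra.adjoin ℤ ({u} : Set K)
    ∧ ∃ w ∈ Algebra.adjoin ℤ ({u} : Set K), θ * w = 1 := by
  subst hA
  have hq_mem (n : ℕ) (hn0 : 0 < n) (hnr : n < r) :
      q n ∈ (Algebra.adjoin ℤ ({u} : Set K)).unitSubmonoid :=
    hq n ▸ quantum_mem_unitSubmonoid hr.two_le hu
      ((hr.coprime_iff_not_dvd.mpr (Nat.not_dvd_of_pos_of_lt hn0 hnr)).symm)
  have hqfact_mem (n : ℕ) (hn : n < r) :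
      qfact n ∈ (Algebra.adjoin ℤ ({u} : Set K)).unitSubmonoid :=
    hqfact n ▸ prod_mem fun k hk => hq_mem _ k.succ_pos (by rw [mem_range] at hk; omega)
  have hr2 := hr.two_le
  rw [← Subalgebra.mem_unitSubmonoid_iff, hθ, div_eq_mul_inv]
  refine mul_mem ?_ (Subalgebra.inv_mem_unitSubmonoid ?_) <;> repeat' apply mul_mem
  all_goals exact hqfact_mem _ (by omega)

/-- Let `r` be an odd prime, `u` a primitive `8r`-th root of unity, `A = u ^ 2`,
`[n] = (A^(2n) - A^(-2n)) / (A^2 - A^(-2))` the quantized integer and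
`[n]! = ∏_{k=1}^n [k]` the quantized factorial.  For nonnegative integers
`x, y, z` with `x + y + z ≤ r - 2` (corresponding to the admissible triple
`(a,b,c) = (y+z, z+x, x+y)` at level `r`), the Kauffman theta coefficient
`θ(a,b,c) = ([x+y+z+1]! [x]! [y]! [z]!) / ([y+z]! [z+x]! [x+y]!)` lies in `ℤ[u]`,
the ring of integers of the cyclotomic field `ℚ(u)`, and is a unit of that ring. -/
theorem theta_mem_and_unit
    (r : ℕ) (hr : Nat.Prime r) (hodd : Odd r)
    (K : Type) [Field K] [CharZero K] (u : K)
    (hu : IsPrimitiveRoot u (8 * r))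
    (A : K) (hA : A = u ^ 2)
    (q : ℕ → K)
    (hq : ∀ n : ℕ, q n =
      (A ^ (2 * (n : ℤ)) - A ^ (-(2 * (n : ℤ)))) / (A ^ (2 : ℤ) - A ^ (-2 : ℤ)))
    (qfact : ℕ → K)
    (hqfact : ∀ n : ℕ, qfact n = ∏ k ∈ Finset.range n, q (k + 1))
    (x y z : ℕ) (hxyz : x + y + z ≤ r - 2)
    (θ : K)
    (hθ : θ = (qfact (x + y + z + 1) * qfact x * qfact y * qfact z) /
              (qfact (y + z) * qfact (z + x) * qfact (x + y))) :
    θ ∈ Algebra.adjoin ℤ ({u} : Set K)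
    ∧ ∃ w ∈ Algebra.adjoin ℤ ({u} : Set K), θ * w = 1 :=
  theta_mem_and_unit_general r hr K u hu A hA q hq qfact hqfact x y z hxyz θ hθ
end
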